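/- arXiv:0907.5128 — 3 statements merged into one kernel-verified Lean document; each statement's English description precedes it below -/
import Mathlib

section
/- The set {(n, n + ⌊√n⌋) : n ≥ 1} ⊆ ℕ² is not a semilinear subset of ℕ², i.e., it is not a finite union of sets of the form {v₀ + k₁v₁ + ⋯ + kₘvₘ : k₁,…,kₘ ∈ ℕ}. -/
/-!
A linear set that is not a single point contains a ray `a + k • v` with `v ≠ 0`. Along such a ray
inside the graph of `n ↦ n + ⌊√n⌋`, the function `⌊√n⌋` would be affine in `k` on the arithmetic
progression `a.1 + k * v.1`: constant if `v.2 ≤ v.1`, impossible since `⌊√n⌋` is unbounded, and of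
slope at least one otherwise, impossible since `⌊√n⌋` is sublinear. Hence a semilinear subset of
the graph is a finite union of points, while the set in question is infinite.
-/

/-- A subset of ℕ² is linear if it is of the form
`{v₀ + k₁v₁ + ⋯ + kₘvₘ : kᵢ ∈ ℕ}`. -/
def IsLinearSet₂ (S : Set (ℕ × ℕ)) : Prop :=
  ∃ (v₀ : ℕ × ℕ) (m : ℕ) (v : Fin m → ℕ × ℕ),
    S = {x | ∃ k : Fin m → ℕ, x = v₀ + ∑ i, k i • v i}

/-- A subset of ℕ² is semilinear if it is a finite union of linear sets. -/
def IsSemilinearSet₂ (S : Set (ℕ × ℕ)) : Prop :=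
  ∃ (r : ℕ) (f : Fin r → Set (ℕ × ℕ)), (∀ i, IsLinearSet₂ (f i)) ∧ S = ⋃ i, f i

theorem Nat.exists_lt_sqrt_add_mul (a M : ℕ) {b : ℕ} (hb : 0 < b) :
    ∃ k, M < Nat.sqrt (a + k * b) := by
  refine ⟨(M + 1) * (M + 1), Nat.le_sqrt.mpr ?_⟩
  nlinarith

theorem Nat.exists_sqrt_add_mul_lt (a b : ℕ) : ∃ k, Nat.sqrt (a + k * b) < k := by
  refine ⟨a + b + 1, Nat.sqrt_lt'.mpr ?_⟩
  nlinarith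

theorem IsLinearSet₂.subsingleton_or_exists_ray {S : Set (ℕ × ℕ)} (hS : IsLinearSet₂ S) :
    S.Subsingleton ∨ ∃ a v : ℕ × ℕ, v ≠ 0 ∧ ∀ k : ℕ, a + k • v ∈ S := by
  obtain ⟨v₀, m, v, rfl⟩ := hS
  by_cases hv : ∀ j, v j = 0
  · left
    rintro x ⟨k, rfl⟩ y ⟨l, rfl⟩
    simp only [hv, smul_zero, Finset.sum_const_zero]
  · obtain ⟨j, hj⟩ := not_forall.mp hv
    refine .inr ⟨v₀, v j, hj, fun k => ⟨Pi.single j k, ?_⟩⟩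
    simp [Pi.single_apply, ite_smul]

def sqrtGraph : Set (ℕ × ℕ) := {x | x.2 = x.1 + Nat.sqrt x.1}

theorem exists_add_smul_not_mem_sqrtGraph (a : ℕ × ℕ) {v : ℕ × ℕ} (hv : v ≠ 0) :
    ∃ k : ℕ, a + k • v ∉ sqrtGraph := by
  by_contra! h
  have hray (k : ℕ) : Nat.sqrt (a.1 + k * v.1) + k * v.1 = Nat.sqrt a.1 + k * v.2 := by
    have h0 : a.2 = a.1 + Nat.sqrt a.1 := by simpa [sqrtGraph] using h 0
    have hk := h k
    simp only [sqrtGraph, Set.mem_ofPred_eq, Prod.fst_add, Prod.snd_add, Prod.smul_fst,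
      Prod.smul_snd, smul_eq_mul] at hk
    omega
  rcases le_or_gt v.2 v.1 with hle | hlt
  · have hv1 : 0 < v.1 := by
      by_contra! hv1
      exact hv (Prod.ext (by simp only [Prod.fst_zero]; omega) (by simp only [Prod.snd_zero]; omega))
    obtain ⟨k, hbig⟩ := Nat.exists_lt_sqrt_add_mul a.1 (Nat.sqrt a.1) hv1
    have hk := hray k
    have hmul := Nat.mul_le_mul_left k hle
    omega
  · obtain ⟨k, hsmall⟩ := Nat.exists_sqrt_add_mul_lt a.1 v.1
    have hk := hray k
    have hmul : k * v.1 + k ≤ k * v.2 := Nat.mul_succ k v.1 ▸ Nat.mul_le_mul_left k hlt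
    omega

theorem IsLinearSet₂.subsingleton_of_subset_sqrtGraph {S : Set (ℕ × ℕ)} (hS : IsLinearSet₂ S)
    (hsub : S ⊆ sqrtGraph) : S.Subsingleton := by
  refine hS.subsingleton_or_exists_ray.resolve_right ?_
  rintro ⟨a, v, hv, hray⟩
  obtain ⟨k, hk⟩ := exists_add_smul_not_mem_sqrtGraph a hv
  exact hk (hsub (hray k))

theorem sqrt_set_not_semilinear :
    ¬ IsSemilinearSet₂ {x : ℕ × ℕ | ∃ n : ℕ, 1 ≤ n ∧ x = (n, n + Nat.sqrt n)} := by
  set G := {x : ℕ × ℕ | ∃ n : ℕ, 1 ≤ n ∧ x = (n, n + Nat.sqrt n)}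
  rintro ⟨r, f, hlin, hG⟩
  have hG_sub : G ⊆ sqrtGraph := by
    rintro _ ⟨n, -, rfl⟩
    rfl
  have hG_inf : G.Infinite :=
    Set.infinite_of_injective_forall_mem (f := fun n : ℕ => (n + 1, n + 1 + Nat.sqrt (n + 1)))
      (fun m n h => by simpa using congrArg Prod.fst h) fun n => ⟨n + 1, by omega, rfl⟩
  refine hG_inf ?_
  rw [hG]
  refine Set.finite_iUnion fun i => ((hlin i).subsingleton_of_subset_sqrtGraph ?_).finite
  exact (Set.subset_iUnion f i).trans (hG ▸ hG_sub)
end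

section
/- The language L₁ = {aⁿ b^{n+⌊√n⌋} : n ≥ 1} over the alphabet {a, b} is not context-free. -/
/-!
A derivation of a word longer than `M ^ #N`, where `M` bounds the right-hand sides and `N` is the
set of nonterminals, has a root-to-leaf path through `#N + 1` nested nonterminals, so one of them,
`B`, repeats: `B ⇒* v B y` and `B ⇒* x`, hence `u vⁱ x yⁱ z` is generated for every `i`. For a
derivation with fewest steps, `v = y = []` is impossible, since cutting out the loop would shorten
it.

In a pumped word of `L₁` the numbers of `a`s and `b`s are `m + i p` and `n + i q` with `p + q > 0`,
so `⌊√(m + i p)⌋ = n - m + i (q - p)` would be affine in `i`. Being nondecreasing, and unbounded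
but sublinear when `p > 0`, it can only be so if `p = q = 0`.
-/

/-- The language `{aⁿ b^{n+⌊√n⌋} : n ≥ 1}` over the two-letter alphabet `Fin 2`,
where `a = 0` and `b = 1`. -/
def L₁ : Language (Fin 2) :=
  {w | ∃ n : ℕ, 1 ≤ n ∧
    w = List.replicate n (0 : Fin 2) ++ List.replicate (n + Nat.sqrt n) (1 : Fin 2)}

namespace ContextFreeGrammar

variable {T : Type*} {g : ContextFreeGrammar T}

lemma Produces.append_split {s₁ s₂ v : List (Symbol T g.NT)} (h : g.Produces (s₁ ++ s₂) v) :
    (∃ w, g.Produces s₁ w ∧ v = w ++ s₂) ∨ ∃ w, g.Produces s₂ w ∧ v = s₁ ++ w := by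
  obtain ⟨r, hr, hrw⟩ := h
  obtain ⟨p, q, hs, rfl⟩ := hrw.exists_parts
  rw [List.append_assoc, List.singleton_append] at hs
  rcases List.append_eq_append_iff.mp hs with ⟨a, rfl, rfl⟩ | ⟨c, rfl, hc⟩
  · exact .inr ⟨a ++ r.output ++ q, ⟨r, hr, by simpa using r.rewrites_of_exists_parts a q⟩,
      by simp⟩
  rcases List.cons_eq_append_iff.mp hc with ⟨rfl, rfl⟩ | ⟨c', rfl, rfl⟩
  · exact .inr ⟨r.output ++ q, ⟨r, hr, .head q⟩, by simp⟩
  · exact .inl ⟨p ++ r.output ++ c', ⟨r, hr, by simpa using r.rewrites_of_exists_parts p c'⟩,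
      by simp⟩

inductive DerivesIn (g : ContextFreeGrammar T) :
    List (Symbol T g.NT) → List (Symbol T g.NT) → ℕ → Prop
  | refl (u : List (Symbol T g.NT)) : g.DerivesIn u u 0
  | head {u v w : List (Symbol T g.NT)} {n : ℕ} :
      g.Produces u v → g.DerivesIn v w n → g.DerivesIn u w (n + 1)

namespace DerivesIn

variable {u v w : List (Symbol T g.NT)} {m n : ℕ}

lemma derives (h : g.DerivesIn u v n) : g.Derives u v := by
  induction h with
  | refl => rfl
  | head huv _ ih => exact huv.trans_derives ih

lemma trans (h₁ : g.DerivesIn u v m) (h₂ : g.DerivesIn v w n) : g.DerivesIn u w (m + n) := by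
  induction h₁ with
  | refl => simpa using h₂
  | head huv _ ih => exact Nat.succ_add _ n ▸ head huv (ih h₂)

lemma append_left (h : g.DerivesIn u v n) (p : List (Symbol T g.NT)) :
    g.DerivesIn (p ++ u) (p ++ v) n := by
  induction h with
  | refl => exact refl _
  | head huv _ ih => exact head (huv.append_left p) ih

lemma append_right (h : g.DerivesIn u v n) (p : List (Symbol T g.NT)) :
    g.DerivesIn (u ++ p) (v ++ p) n := by
  induction h with
  | refl => exact refl _
  | head huv _ ih => exact head (huv.append_right p) ih

lemma eq_of_map_terminal {w : List T} (h : g.DerivesIn (w.map .terminal) v n) :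
    v = w.map .terminal := by
  cases h with
  | refl => rfl
  | head huv _ =>
    obtain ⟨r, -, hr⟩ := huv.exists_nonterminal_input_mem
    simp at hr

lemma append_split {s₁ s₂ : List (Symbol T g.NT)}
    (h : g.DerivesIn (s₁ ++ s₂) w n) :
    ∃ w₁ w₂ n₁ n₂, w = w₁ ++ w₂ ∧ n₁ + n₂ = n ∧ g.DerivesIn s₁ w₁ n₁ ∧ g.DerivesIn s₂ w₂ n₂ := by
  induction n generalizing s₁ s₂ with
  | zero =>
    cases h
    exact ⟨s₁, s₂, 0, 0, rfl, rfl, .refl _, .refl _⟩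
  | succ n ih =>
    cases h with
    | head huv hvw =>
    rcases huv.append_split with ⟨u₁, hu, rfl⟩ | ⟨u₂, hu, rfl⟩
    · obtain ⟨w₁, w₂, n₁, n₂, rfl, rfl, h₁, h₂⟩ := ih hvw
      exact ⟨w₁, w₂, n₁ + 1, n₂, rfl, by omega, .head hu h₁, h₂⟩
    · obtain ⟨w₁, w₂, n₁, n₂, rfl, rfl, h₁, h₂⟩ := ih hvw
      exact ⟨w₁, w₂, n₁, n₂ + 1, rfl, by omega, h₁, .head hu h₂⟩

lemma exists_rule {A : g.NT} {w : List T}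
    (h : g.DerivesIn [.nonterminal A] (w.map .terminal) n) :
    ∃ r ∈ g.rules, r.input = A ∧ ∃ k, n = k + 1 ∧ g.DerivesIn r.output (w.map .terminal) k := by
  generalize hv : w.map Symbol.terminal = v at h
  cases h with
  | refl => cases w <;> simp at hv
  | head huv hvw =>
    obtain ⟨r, hr, hrw⟩ := huv
    cases hrw with
    | head => exact ⟨r, hr, rfl, _, rfl, by simpa using hvw⟩
    | cons _ hrs => cases hrs

lemma exists_long_factor {s : List (Symbol T g.NT)} {w : List T} {K : ℕ} (hK : 0 < K)
    (h : g.DerivesIn s (w.map .terminal) n) (hlen : K * s.length < w.length) :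
    ∃ (u x z : List T) (B : g.NT) (j k : ℕ), w = u ++ x ++ z ∧ j + k ≤ n ∧ K < x.length ∧
      g.DerivesIn s (u.map .terminal ++ [.nonterminal B] ++ z.map .terminal) j ∧
      g.DerivesIn [.nonterminal B] (x.map .terminal) k := by
  induction s generalizing w n with
  | nil =>
    have hw := eq_of_map_terminal (w := []) h
    simp_all
  | cons a s ih =>
    obtain ⟨w₁, w₂, n₁, n₂, hw, rfl, h₁, h₂⟩ := append_split (s₁ := [a]) h
    obtain ⟨u₁, u₂, rfl, rfl, rfl⟩ := List.map_eq_append_iff.mp hw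
    rw [List.length_cons, Nat.mul_succ, List.length_append] at hlen
    by_cases hu₁ : K < u₁.length
    · cases a with
      | terminal t =>
        have := congrArg List.length (h₁.eq_of_map_terminal (w := [t]))
        simp only [List.length_map, List.length_singleton] at this
        omega
      | nonterminal B =>
        exact ⟨[], u₁, u₂, B, n₂, n₁, by simp, by omega, hu₁,
          by simpa using h₂.append_left [.nonterminal B], h₁⟩
    · obtain ⟨u, x, z, B, j, k, rfl, hjk, hx, hs, hB⟩ := ih h₂ (by omega)
      refine ⟨u₁ ++ u, x, z, B, n₁ + j, k, by simp, by omega, hx, ?_, hB⟩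
      simpa using (h₁.append_right s).trans (hs.append_left _)

end DerivesIn

lemma Derives.exists_derivesIn {u v : List (Symbol T g.NT)} (h : g.Derives u v) :
    ∃ n, g.DerivesIn u v n := by
  induction h using Relation.ReflTransGen.head_induction_on with
  | refl => exact ⟨0, .refl v⟩
  | head huv _ ih => exact ⟨_, .head huv ih.choose_spec⟩

lemma Derives.pump {B : g.NT} {v y : List T}
    (h : g.Derives [.nonterminal B] (v.map .terminal ++ [.nonterminal B] ++ y.map .terminal))
    (i : ℕ) :
    g.Derives [.nonterminal B] ((List.replicate i v).flatten.map .terminal ++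
      [.nonterminal B] ++ (List.replicate i y).flatten.map .terminal) := by
  induction i with
  | zero => simpa using Derives.refl _
  | succ i ih =>
    rw [List.replicate_succ, List.replicate_succ' (a := y)]
    simpa using h.trans ((ih.append_left (v.map .terminal)).append_right (y.map .terminal))

/-- A node of a derivation tree, recorded by its nonterminal, the terminal word below it, and the
number of steps deriving that word. -/
structure Yield (g : ContextFreeGrammar T) where
  nt : g.NT
  word : List T
  steps : ℕ
  derivesIn : g.DerivesIn [.nonterminal nt] (word.map .terminal) steps

namespace Yield

/-- `q` lies below `p`: `p.nt` derives `u q.nt z`, where `p.word = u ++ q.word ++ z`, in few enough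
steps that continuing with the derivation of `q` takes at most `p.steps` steps. -/
def Nests (p q : g.Yield) : Prop :=
  ∃ (u z : List T) (j : ℕ), p.word = u ++ q.word ++ z ∧ j + q.steps ≤ p.steps ∧
    g.DerivesIn [.nonterminal p.nt] (u.map .terminal ++ [.nonterminal q.nt] ++ z.map .terminal) j

lemma Nests.refl (p : g.Yield) : p.Nests p :=
  ⟨[], [], 0, by simp, by simp, by simpa using .refl _⟩

lemma Nests.trans {p q r : g.Yield} (hpq : p.Nests q) (hqr : q.Nests r) : p.Nests r := by
  obtain ⟨u₁, z₁, j₁, hw₁, hj₁, h₁⟩ := hpq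
  obtain ⟨u₂, z₂, j₂, hw₂, hj₂, h₂⟩ := hqr
  refine ⟨u₁ ++ u₂, z₂ ++ z₁, j₁ + j₂, by simp [hw₁, hw₂], by omega, ?_⟩
  simpa using h₁.trans ((h₂.append_left (u₁.map .terminal)).append_right (z₁.map .terminal))

lemma nt_mem_image_input [DecidableEq g.NT] (p : g.Yield) :
    p.nt ∈ g.rules.image ContextFreeRule.input := by
  obtain ⟨r, hr, hA, -⟩ := p.derivesIn.exists_rule
  exact Finset.mem_image.mpr ⟨r, hr, hA⟩

lemma exists_nests_of_pow_lt {M c : ℕ} (hM₀ : 0 < M) (hM : ∀ r ∈ g.rules, r.output.length ≤ M)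
    (p : g.Yield) (hp : M ^ (c + 1) < p.word.length) :
    ∃ q : g.Yield, p.Nests q ∧ q.steps < p.steps ∧ M ^ c < q.word.length := by
  obtain ⟨r, hr, hA, k, hk, hout⟩ := p.derivesIn.exists_rule
  have hlen : M ^ c * r.output.length < p.word.length :=
    calc M ^ c * r.output.length ≤ M ^ c * M := Nat.mul_le_mul_left _ (hM r hr)
      _ = M ^ (c + 1) := (pow_succ M c).symm
      _ < p.word.length := hp
  obtain ⟨u, x, z, B, j, k', hw, hjk, hx, hs, hB⟩ := hout.exists_long_factor (pow_pos hM₀ c) hlen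
  have hpB : g.DerivesIn [.nonterminal p.nt]
      (u.map .terminal ++ [.nonterminal B] ++ z.map .terminal) (j + 1) :=
    .head ⟨r, hr, hA ▸ .input_output⟩ hs
  exact ⟨⟨B, x, k', hB⟩, ⟨u, z, j + 1, hw, by dsimp only; omega, hpB⟩, by dsimp only; omega, hx⟩

lemma exists_chain {M : ℕ} (hM₀ : 0 < M) (hM : ∀ r ∈ g.rules, r.output.length ≤ M) (c : ℕ)
    (p : g.Yield) (hp : M ^ c < p.word.length) :
    ∃ f : Fin (c + 1) → g.Yield, f 0 = p ∧ (∀ i j, i ≤ j → (f i).Nests (f j)) ∧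
      StrictAnti fun i => (f i).steps := by
  induction c generalizing p with
  | zero => exact ⟨fun _ => p, rfl, fun _ _ _ => .refl p, Subsingleton.strictAnti (α := Fin 1) _⟩
  | succ c ih =>
    obtain ⟨q, hpq, hsteps, hq⟩ := exists_nests_of_pow_lt hM₀ hM p hp
    obtain ⟨f, rfl, hnest, hanti⟩ := ih q hq
    refine ⟨Fin.cons p f, rfl, fun i j hij => ?_, ?_⟩
    · induction i using Fin.cases <;> induction j using Fin.cases
      · exact .refl p
      · exact hpq.trans (hnest 0 _ (Fin.zero_le _))
      · simp at hij
      · exact hnest _ _ (Fin.succ_le_succ_iff.mp hij)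
    · rw [Fin.strictAnti_iff_succ_lt]
      intro i
      induction i using Fin.cases
      · simpa using hsteps
      · simpa using hanti Fin.castSucc_lt_succ

lemma exists_pump {p q r : g.Yield} (hpq : p.Nests q) (hqr : q.Nests r) (hnt : q.nt = r.nt)
    (hsteps : r.steps < q.steps)
    (hmin : ∀ k, g.DerivesIn [.nonterminal p.nt] (p.word.map .terminal) k → p.steps ≤ k) :
    ∃ u v x y z : List T, p.word = u ++ v ++ x ++ y ++ z ∧ v ++ y ≠ [] ∧
      ∀ i, g.Derives [.nonterminal p.nt] ((u ++ (List.replicate i v).flatten ++ x ++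
        (List.replicate i y).flatten ++ z).map .terminal) := by
  obtain ⟨u, z, j₀, hw, hj₀, h₀⟩ := hpq
  obtain ⟨v, y, j₁, hq, -, h₁⟩ := hqr
  refine ⟨u, v, r.word, y, z, by simp [hw, hq], ?_, fun i => ?_⟩
  · intro hvy
    obtain ⟨rfl, rfl⟩ := List.append_eq_nil_iff.mp hvy
    have hshort : g.DerivesIn [.nonterminal p.nt] (p.word.map .terminal) (j₀ + r.steps) := by
      rw [hnt] at h₀
      have := h₀.trans ((r.derivesIn.append_left (u.map .terminal)).append_right (z.map .terminal))
      simpa [hw, hq] using this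
    have := hmin _ hshort
    omega
  · rw [← hnt] at h₁
    have hx : g.Derives [.nonterminal q.nt] (r.word.map .terminal) := hnt ▸ r.derivesIn.derives
    have hloop := (h₁.derives.pump i).trans ((hx.append_left _).append_right _)
    simpa using h₀.derives.trans ((hloop.append_left _).append_right _)

end Yield

theorem pumping_lemma (g : ContextFreeGrammar T) :
    ∃ K : ℕ, ∀ w ∈ g.language, K < w.length →
      ∃ u v x y z : List T, w = u ++ v ++ x ++ y ++ z ∧ v ++ y ≠ [] ∧
        ∀ i : ℕ, u ++ (List.replicate i v).flatten ++ x ++ (List.replicate i y).flatten ++ z ∈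
          g.language := by
  classical
  set M := (g.rules.sup fun r => r.output.length) + 1
  have hM : ∀ r ∈ g.rules, r.output.length ≤ M := fun r hr =>
    (Finset.le_sup (f := fun r => r.output.length) hr).trans (Nat.le_succ _)
  set N := g.rules.image ContextFreeRule.input
  refine ⟨M ^ N.card, fun w hw hK => ?_⟩
  have hex : ∃ n, g.DerivesIn [.nonterminal g.initial] (w.map .terminal) n :=
    Derives.exists_derivesIn hw
  let p : g.Yield := ⟨g.initial, w, Nat.find hex, Nat.find_spec hex⟩
  obtain ⟨f, hf0, hnest, hanti⟩ := Yield.exists_chain (Nat.succ_pos _) hM N.card p hK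
  obtain ⟨i, -, j, -, hij, hnt⟩ := Finset.exists_ne_map_eq_of_card_lt_of_maps_to
    (s := Finset.univ) (t := N) (by simp) (f := fun i => (f i).nt)
    (fun i _ => (f i).nt_mem_image_input)
  wlog hlt : i < j generalizing i j
  · exact this j i hij.symm hnt.symm (hij.lt_or_gt.resolve_left hlt)
  exact Yield.exists_pump (hf0 ▸ hnest 0 i (Fin.zero_le _)) (hnest i j hlt.le) hnt (hanti hlt)
    fun k hk => Nat.find_min' hex hk

end ContextFreeGrammar

lemma List.count_pump {α : Type*} [BEq α] (a : α) (u v x y z : List α) (i : ℕ) :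
    (u ++ (List.replicate i v).flatten ++ x ++ (List.replicate i y).flatten ++ z).count a =
      (u ++ x ++ z).count a + i * (v ++ y).count a := by
  simp only [List.count_append, List.count_flatten, List.map_replicate, List.sum_replicate,
    smul_eq_mul]
  ring

theorem Nat.eq_zero_of_sqrt_add_mul {a p q : ℕ}
    (h : ∀ i, Nat.sqrt (a + i * p) + i * p = Nat.sqrt a + i * q) : p = 0 ∧ q = 0 := by
  have hpq : p ≤ q := by
    have h₁ := h 1
    have := Nat.sqrt_le_sqrt (Nat.le_add_right a p)
    simp only [one_mul] at h₁
    omega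
  have hqp : q ≤ p := by
    by_contra! hlt
    obtain ⟨N, hN⟩ : ∃ N, N = a + p + 1 := ⟨_, rfl⟩
    have hNq : N * p + N ≤ N * q := by nlinarith
    have hsqrt : N ≤ Nat.sqrt (a + N * p) := by
      have := h N
      omega
    have := Nat.le_sqrt'.mp hsqrt
    nlinarith
  obtain rfl := le_antisymm hpq hqp
  suffices p = 0 from ⟨this, this⟩
  by_contra hp
  have hsqrt : Nat.sqrt a + 1 ≤ Nat.sqrt (a + (2 * a + 1) * p) := by
    rw [Nat.le_sqrt']
    have := Nat.sqrt_le' a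
    have := Nat.sqrt_le_self a
    have : 1 ≤ p := Nat.one_le_iff_ne_zero.mpr hp
    nlinarith
  have := h (2 * a + 1)
  omega

lemma count_one_eq_of_mem_L₁ {w : List (Fin 2)} (hw : w ∈ L₁) :
    w.count 1 = w.count 0 + Nat.sqrt (w.count 0) := by
  obtain ⟨n, -, rfl⟩ := hw
  simp [List.count_replicate]

theorem L₁_not_contextFree : ¬ L₁.IsContextFree := by
  rintro ⟨g, hg⟩
  obtain ⟨K, hK⟩ := g.pumping_lemma
  obtain ⟨u, v, x, y, z, -, hvy, hpump⟩ := hK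
    (List.replicate (K + 1) 0 ++ List.replicate (K + 1 + Nat.sqrt (K + 1)) 1)
    (hg ▸ ⟨K + 1, by omega, rfl⟩) (by simp; omega)
  have hcount (i : ℕ) : Nat.sqrt ((u ++ x ++ z).count 0 + i * (v ++ y).count 0) +
      i * (v ++ y).count 0 = Nat.sqrt ((u ++ x ++ z).count 0) + i * (v ++ y).count 1 := by
    have h₀ := count_one_eq_of_mem_L₁ (hg ▸ hpump 0)
    have hᵢ := count_one_eq_of_mem_L₁ (hg ▸ hpump i)
    simp only [List.count_pump, zero_mul, add_zero] at h₀ hᵢ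
    omega
  obtain ⟨hP, hQ⟩ := Nat.eq_zero_of_sqrt_add_mul hcount
  obtain ⟨a, ha⟩ := List.exists_mem_of_ne_nil _ hvy
  fin_cases a
  · exact (List.count_pos_iff.mpr ha).ne' hP
  · exact (List.count_pos_iff.mpr ha).ne' hQ
end

section
/- The set {(2ⁿ, n, 2ⁿ + n) : n ≥ 1} ⊆ ℕ³ is not semilinear. -/
/-- A subset of ℕ³ is linear if it is of the form
`{v₀ + k₁v₁ + ⋯ + kₘvₘ : kᵢ ∈ ℕ}`. -/
def IsLinearSet₃ (S : Set (ℕ × ℕ × ℕ)) : Prop :=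
  ∃ (v₀ : ℕ × ℕ × ℕ) (m : ℕ) (v : Fin m → ℕ × ℕ × ℕ),
    S = {x | ∃ k : Fin m → ℕ, x = v₀ + ∑ i, k i • v i}

/-- A subset of ℕ³ is semilinear if it is a finite union of linear sets. -/
def IsSemilinearSet₃ (S : Set (ℕ × ℕ × ℕ)) : Prop :=
  ∃ (r : ℕ) (f : Fin r → Set (ℕ × ℕ × ℕ)), (∀ i, IsLinearSet₃ (f i)) ∧ S = ⋃ i, f i

/-!
An infinite semilinear set contains a ray `a + ℕ • d` with `d ≠ 0`. Three consecutive points of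
such a ray in our set would give exponents `n, n + y, n + 2y` with `2ⁿ, 2ⁿ⁺ʸ, 2ⁿ⁺²ʸ` in arithmetic
progression, i.e. `2ⁿ (2ʸ - 1)² = 0`, forcing `y = 0` and then `d = 0`.
-/

theorem IsLinearSet₃.exists_ray_of_infinite {S : Set (ℕ × ℕ × ℕ)} (hS : IsLinearSet₃ S)
    (hinf : S.Infinite) : ∃ a d, d ≠ 0 ∧ ∀ c : ℕ, a + c • d ∈ S := by
  obtain ⟨v₀, m, v, rfl⟩ := hS
  obtain ⟨j, hj⟩ : ∃ j, v j ≠ 0 := by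
    by_contra! h
    refine hinf ((Set.finite_singleton v₀).subset ?_)
    rintro x ⟨k, rfl⟩
    simp [h]
  refine ⟨v₀, v j, hj, fun c => ⟨Pi.single j c, ?_⟩⟩
  rw [Fintype.sum_eq_single j fun i hi => by simp [Pi.single_eq_of_ne hi], Pi.single_eq_same]

theorem IsSemilinearSet₃.exists_ray_of_infinite {S : Set (ℕ × ℕ × ℕ)} (hS : IsSemilinearSet₃ S)
    (hinf : S.Infinite) : ∃ a d, d ≠ 0 ∧ ∀ c : ℕ, a + c • d ∈ S := by
  obtain ⟨r, f, hlin, rfl⟩ := hS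
  obtain ⟨i, hi⟩ : ∃ i, (f i).Infinite := by
    by_contra! h
    exact hinf (Set.finite_iUnion h)
  obtain ⟨a, d, hd, hray⟩ := (hlin i).exists_ray_of_infinite hi
  exact ⟨a, d, hd, fun c => Set.mem_iUnion_of_mem i (hray c)⟩

theorem eq_zero_of_pow_add_pow_eq_two_mul_pow {b : ℕ} (hb : 1 < b) {n y : ℕ}
    (h : b ^ n + b ^ (n + 2 * y) = 2 * b ^ (n + y)) : y = 0 := by
  have hsq : ((b : ℤ) ^ n) * ((b : ℤ) ^ y - 1) ^ 2 = 0 := by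
    have := congrArg (fun t : ℕ => (t : ℤ)) h
    push_cast [pow_add, pow_mul] at this
    linear_combination this
  have hpow : b ^ y = 1 := by
    have : (b : ℤ) ^ y - 1 = 0 := by simpa [(zero_lt_one.trans hb).ne'] using hsq
    exact_mod_cast sub_eq_zero.mp this
  exact (Nat.pow_eq_one.mp hpow).resolve_left hb.ne'

theorem two_pow_set_infinite :
    {x : ℕ × ℕ × ℕ | ∃ n : ℕ, 1 ≤ n ∧ x = (2 ^ n, n, 2 ^ n + n)}.Infinite :=
  Set.infinite_of_injective_forall_mem
    (f := fun n : ℕ => (2 ^ (n + 1), n + 1, 2 ^ (n + 1) + (n + 1)))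
    (fun a b hab => by simpa using congrArg (fun p : ℕ × ℕ × ℕ => p.2.1) hab)
    (fun n => ⟨n + 1, n.succ_pos, rfl⟩)

theorem eq_zero_of_two_pow_progression {a d : ℕ × ℕ × ℕ} {n₀ n₁ n₂ : ℕ}
    (h₀ : a = (2 ^ n₀, n₀, 2 ^ n₀ + n₀)) (h₁ : a + d = (2 ^ n₁, n₁, 2 ^ n₁ + n₁))
    (h₂ : a + 2 • d = (2 ^ n₂, n₂, 2 ^ n₂ + n₂)) : d = 0 := by
  obtain ⟨x, y, z⟩ := d
  subst h₀
  simp only [Prod.smul_mk, smul_eq_mul, Prod.mk_add_mk, Prod.mk.injEq] at h₁ h₂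
  obtain ⟨hx₁, rfl, hz₁⟩ := h₁
  obtain ⟨hx₂, rfl, -⟩ := h₂
  obtain rfl : y = 0 := eq_zero_of_pow_add_pow_eq_two_mul_pow one_lt_two (n := n₀) (by omega)
  simp only [add_zero] at hx₁ hz₁
  simp only [Prod.mk_eq_zero, true_and]
  omega

theorem pow_set_not_semilinear :
    ¬ IsSemilinearSet₃ {x : ℕ × ℕ × ℕ | ∃ n : ℕ, 1 ≤ n ∧ x = (2 ^ n, n, 2 ^ n + n)} := by
  intro hS
  obtain ⟨a, d, hd, hray⟩ := hS.exists_ray_of_infinite two_pow_set_infinite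
  obtain ⟨n₀, -, h₀⟩ := hray 0
  obtain ⟨n₁, -, h₁⟩ := hray 1
  obtain ⟨n₂, -, h₂⟩ := hray 2
  rw [zero_smul, add_zero] at h₀
  rw [one_smul] at h₁
  exact hd (eq_zero_of_two_pow_progression h₀ h₁ h₂)
end
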